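/- arXiv:2008.06483 — 6 statements merged into one kernel-verified Lean document; each statement's English description precedes it below -/
import Mathlib

section
/- For real numbers a < 0 and b > 0, the function g(x) = a·x + (b + x)·√(1 - x²) has at most one zero in the open interval (0, 1). -/
/-! Dividing by `x`, a zero of `g` in `(0, 1)` solves `(b / x + 1) * √(1 - x²) = -a`,
and the left-hand side is strictly decreasing on `(0, 1]` when `b ≥ 0`. -/

lemma strictAntiOn_div_add_one_mul_sqrt_one_sub_sq {b : ℝ} (hb : 0 ≤ b) :
    StrictAntiOn (fun x => (b / x + 1) * √(1 - x ^ 2)) (Set.Ioc 0 1) := by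
  rintro x ⟨hx0, hx1⟩ y ⟨hy0, hy1⟩ hxy
  have hsqrt : √(1 - y ^ 2) < √(1 - x ^ 2) := Real.sqrt_lt_sqrt (by nlinarith) (by nlinarith)
  calc (b / y + 1) * √(1 - y ^ 2) < (b / y + 1) * √(1 - x ^ 2) := by gcongr
    _ ≤ (b / x + 1) * √(1 - x ^ 2) := by gcongr

lemma div_add_one_mul_eq_neg_of_mul_add_mul_eq_zero {a b x s : ℝ} (hx : x ≠ 0)
    (h : a * x + (b + x) * s = 0) : (b / x + 1) * s = -a := by
  field_simp
  linarith

theorem stmt_2_general (a b : ℝ) (hb : 0 < b) :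
    {x ∈ Set.Ioo (0:ℝ) 1 | a * x + (b + x) * Real.sqrt (1 - x^2) = 0}.Subsingleton := by
  rintro x ⟨hx, ex⟩ y ⟨hy, ey⟩
  refine (strictAntiOn_div_add_one_mul_sqrt_one_sub_sq hb.le).injOn
    (Set.Ioo_subset_Ioc_self hx) (Set.Ioo_subset_Ioc_self hy) ?_
  exact (div_add_one_mul_eq_neg_of_mul_add_mul_eq_zero hx.1.ne' ex).trans
    (div_add_one_mul_eq_neg_of_mul_add_mul_eq_zero hy.1.ne' ey).symm

theorem stmt_2 (a b : ℝ) (ha : a < 0) (hb : 0 < b) :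
    {x ∈ Set.Ioo (0:ℝ) 1 | a * x + (b + x) * Real.sqrt (1 - x^2) = 0}.Subsingleton :=
  stmt_2_general a b hb
end

section
/- For real numbers a > 0 and b < 0, the function g(x) = a·x + (b + x)·√(1 - x²) has at most one zero in the open interval (0, 1). -/
/-! On `(0, 1)` the factor `√(1 - x²)` is positive, and dividing by it turns `g` into
`a · x / √(1 - x²) + b + x`, which is strictly increasing there; so `g` vanishes at most once. -/

open Set Real

lemma sqrt_one_sub_sq_pos {x : ℝ} (h₀ : -1 < x) (h₁ : x < 1) : 0 < √(1 - x ^ 2) :=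
  sqrt_pos.mpr (by nlinarith)

lemma strictMonoOn_div_sqrt_one_sub_sq : StrictMonoOn (fun x : ℝ => x / √(1 - x ^ 2)) (Ico 0 1) := by
  rintro x ⟨hx0, -⟩ y ⟨hy0, hy1⟩ hxy
  have hsy : 0 < √(1 - y ^ 2) := sqrt_one_sub_sq_pos (by linarith) hy1
  have hsx : 0 < √(1 - x ^ 2) := sqrt_one_sub_sq_pos (by linarith) (hxy.trans hy1)
  have hs : √(1 - y ^ 2) ≤ √(1 - x ^ 2) := sqrt_le_sqrt (by nlinarith)
  rw [div_lt_div_iff₀ hsx hsy]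
  calc x * √(1 - y ^ 2) ≤ x * √(1 - x ^ 2) := mul_le_mul_of_nonneg_left hs hx0
    _ < y * √(1 - x ^ 2) := mul_lt_mul_of_pos_right hxy hsx

lemma strictMonoOn_mul_div_sqrt_one_sub_sq_add {a : ℝ} (ha : 0 ≤ a) (b : ℝ) :
    StrictMonoOn (fun x : ℝ => a * (x / √(1 - x ^ 2)) + b + x) (Ico 0 1) := by
  intro x hx y hy hxy
  have := strictMonoOn_div_sqrt_one_sub_sq.monotoneOn hx hy hxy.le
  dsimp only
  nlinarith [mul_le_mul_of_nonneg_left this ha]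

lemma mul_add_mul_sqrt_one_sub_sq_eq {x : ℝ} (hx : x ∈ Ioo 0 1) (a b : ℝ) :
    a * x + (b + x) * √(1 - x ^ 2) = √(1 - x ^ 2) * (a * (x / √(1 - x ^ 2)) + b + x) := by
  have hs : √(1 - x ^ 2) ≠ 0 := (sqrt_one_sub_sq_pos (by linarith [hx.1]) hx.2).ne'
  field_simp
  ring

theorem stmt_3_general (a b : ℝ) (ha : 0 < a) :
    {x ∈ Set.Ioo (0:ℝ) 1 | a * x + (b + x) * Real.sqrt (1 - x^2) = 0}.Subsingleton := by
  have zero_of_mem : ∀ x ∈ {x ∈ Set.Ioo (0:ℝ) 1 | a * x + (b + x) * √(1 - x ^ 2) = 0},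
      a * (x / √(1 - x ^ 2)) + b + x = 0 := by
    rintro x ⟨hx, hgx⟩
    rw [mul_add_mul_sqrt_one_sub_sq_eq hx] at hgx
    exact (mul_eq_zero.mp hgx).resolve_left
      (sqrt_one_sub_sq_pos (by linarith [hx.1]) hx.2).ne'
  intro x hx y hy
  exact (strictMonoOn_mul_div_sqrt_one_sub_sq_add ha.le b).injOn
    (Ioo_subset_Ico_self hx.1) (Ioo_subset_Ico_self hy.1)
    ((zero_of_mem x hx).trans (zero_of_mem y hy).symm)

theorem stmt_3 (a b : ℝ) (ha : 0 < a) (hb : b < 0) :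
    {x ∈ Set.Ioo (0:ℝ) 1 | a * x + (b + x) * Real.sqrt (1 - x^2) = 0}.Subsingleton :=
  stmt_3_general a b ha
end

section
/- For any nonzero real numbers a and b, the function g₁(x) = a·x + (b + x)·√(1 - x²) has at most three zeros in the interval [-1, 1]. -/
/-!
Squaring `(b + x) √(1 - x²) = ∓ a x` shows that the zeros of `g₁` and of `g₂ x = -a x + (b + x) √(1 - x²)`
are all roots of the same nonzero quartic. The two zero sets are disjoint, since a common zero has `a x = 0`,
hence `x = 0` and `b = 0`; and `g₂` has a zero by the intermediate value theorem, as `g₂ (-1) = a` and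
`g₂ 1 = -a`. So `g₁` has at most `4 - 1 = 3` zeros.
-/

open Polynomial Set

namespace SqrtQuartic

/-- `g a b` is `g₁`, and `g (-a) b` is `g₂`. -/
noncomputable def g (a b x : ℝ) : ℝ := a * x + (b + x) * √(1 - x ^ 2)

noncomputable def quartic (a b : ℝ) : ℝ[X] := (C b + X) ^ 2 * (1 - X ^ 2) - C (a ^ 2) * X ^ 2

lemma eval_quartic (a b x : ℝ) :
    (quartic a b).eval x = (b + x) ^ 2 * (1 - x ^ 2) - a ^ 2 * x ^ 2 := by
  simp [quartic]

lemma quartic_neg (a b : ℝ) : quartic (-a) b = quartic a b := by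
  simp [quartic]

lemma natDegree_quartic_le (a b : ℝ) : (quartic a b).natDegree ≤ 4 := by
  unfold quartic
  compute_degree

lemma quartic_ne_zero (a : ℝ) {b : ℝ} (hb : b ≠ 0) : quartic a b ≠ 0 := by
  intro h
  have := eval_quartic a b 0
  simp [h] at this
  exact hb (pow_eq_zero_iff two_ne_zero |>.mp this.symm)

lemma quartic_isRoot_of_g_eq_zero {a b x : ℝ} (hx : x ^ 2 ≤ 1) (h : g a b x = 0) :
    (quartic a b).IsRoot x := by
  have hsqrt : (b + x) * √(1 - x ^ 2) = -(a * x) := by unfold g at h; linarith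
  have hsq : (b + x) ^ 2 * (1 - x ^ 2) = ((b + x) * √(1 - x ^ 2)) ^ 2 := by
    rw [mul_pow, Real.sq_sqrt (by linarith)]
  rw [IsRoot, eval_quartic, hsq, hsqrt]
  ring

lemma exists_g_eq_zero (a b : ℝ) : ∃ x ∈ Icc (-1 : ℝ) 1, g a b x = 0 := by
  have hcont : ContinuousOn (g a b) (uIcc (-1) 1) := by unfold g; fun_prop
  have hends : (0 : ℝ) ∈ uIcc (g a b (-1)) (g a b 1) := by
    have hl : g a b (-1) = -a := by norm_num [g]
    have hr : g a b 1 = a := by norm_num [g]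
    rw [hl, hr, mem_uIcc]
    rcases le_total a 0 with h | h
    · exact Or.inr ⟨h, by linarith⟩
    · exact Or.inl ⟨by linarith, h⟩
  obtain ⟨x, hx, hgx⟩ := intermediate_value_uIcc hcont hends
  exact ⟨x, by rwa [uIcc_of_le (by norm_num)] at hx, hgx⟩

lemma g_ne_zero_of_g_neg_eq_zero {a b x : ℝ} (ha : a ≠ 0) (hb : b ≠ 0) (h : g (-a) b x = 0) :
    g a b x ≠ 0 := by
  intro h'
  have hx : x = 0 := by
    have : a * x = 0 := by unfold g at h h'; linarith
    exact (mul_eq_zero.mp this).resolve_left ha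
  subst hx
  simp [g] at h'
  exact hb h'

end SqrtQuartic

open SqrtQuartic in
theorem stmt_8 (a b : ℝ) (ha : a ≠ 0) (hb : b ≠ 0) :
    ∃ s : Finset ℝ, s.card ≤ 3 ∧
      ∀ x ∈ Set.Icc (-1 : ℝ) 1, a * x + (b + x) * Real.sqrt (1 - x^2) = 0 → x ∈ s := by
  have hsq : ∀ x ∈ Icc (-1 : ℝ) 1, x ^ 2 ≤ 1 := fun x hx => by nlinarith [hx.1, hx.2]
  have hp := quartic_ne_zero a hb
  obtain ⟨x₀, hx₀, hgx₀⟩ := exists_g_eq_zero (-a) b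
  have hx₀root : x₀ ∈ (quartic a b).roots.toFinset := by
    rw [Multiset.mem_toFinset, mem_roots hp, ← quartic_neg]
    exact quartic_isRoot_of_g_eq_zero (hsq x₀ hx₀) hgx₀
  refine ⟨(quartic a b).roots.toFinset.erase x₀, ?_, fun x hx hgx => ?_⟩
  · have := (Multiset.toFinset_card_le _).trans ((card_roots' _).trans (natDegree_quartic_le a b))
    rw [Finset.card_erase_of_mem hx₀root]
    omega
  · refine Finset.mem_erase.mpr ⟨?_, ?_⟩
    · rintro rfl
      exact g_ne_zero_of_g_neg_eq_zero ha hb hgx₀ hgx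
    · rw [Multiset.mem_toFinset, mem_roots hp]
      exact quartic_isRoot_of_g_eq_zero (hsq x hx) hgx
end

section
/- For any nonzero vector v = (v₁, v₂, v₃) in ℝ³, the function t ↦ ⟨η(t), v⟩, where η(t) = (cos t, sin t, cos² t), has at most two critical points in the open interval (0, π/2). Equivalently, the equation -v₁·sin t + v₂·cos t - 2v₃·sin t·cos t = 0 has at most two solutions t ∈ (0, π/2). -/
/-!
On `(0, π/2)` we have `cos t > 0`, so the critical points are the zeros of
`g t = v₂ - v₁ tan t - 2 v₃ sin t` (the derivative divided by `cos t`). Since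
`g' t = -(v₁ + 2 v₃ cos³ t) / cos² t` and `cos³` is strictly decreasing there, `g'` vanishes at
most once unless `v₁ = v₃ = 0`. By Rolle's theorem three zeros of `g` would give two zeros of
`g'`, forcing `v₁ = v₃ = 0`, and then `g ≡ v₂` forces `v₂ = 0`.
-/

open Real Set

theorem exists_finset_card_le_two_of_not_lt_lt {α : Type*} [LinearOrder α] {p : α → Prop}
    (h : ∀ a b c, p a → p b → p c → a < b → b < c → False) :
    ∃ s : Finset α, s.card ≤ 2 ∧ ∀ x, p x → x ∈ s := by
  have hS : {x | p x}.encard ≤ 2 := by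
    by_contra! hlt
    obtain ⟨t, htS, ht⟩ := exists_subset_encard_eq (Order.add_one_le_of_lt hlt)
    have htf : t.Finite := finite_of_encard_eq_coe ht
    have hcard : htf.toFinset.card = 3 := by
      have := htf.encard_eq_coe_toFinset_card
      rw [ht] at this
      exact_mod_cast this.symm
    set f := htf.toFinset.orderEmbOfFin hcard
    have hf (i : Fin 3) : p (f i) := htS (htf.mem_toFinset.1 (Finset.orderEmbOfFin_mem _ _ i))
    exact h _ _ _ (hf 0) (hf 1) (hf 2) (f.strictMono (by decide)) (f.strictMono (by decide))
  have hfin := finite_of_encard_le_coe hS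
  refine ⟨hfin.toFinset, ?_, fun x hx => hfin.mem_toFinset.2 hx⟩
  rw [hfin.encard_eq_coe_toFinset_card] at hS
  exact_mod_cast hS

noncomputable def derivDivCos (v₁ v₂ v₃ t : ℝ) : ℝ := v₂ - v₁ * tan t - 2 * v₃ * sin t

theorem hasDerivAt_projection (v₁ v₂ v₃ t : ℝ) :
    HasDerivAt (fun t => v₁ * cos t + v₂ * sin t + v₃ * cos t ^ 2)
      (-v₁ * sin t + v₂ * cos t - 2 * v₃ * sin t * cos t) t := by
  refine ((((hasDerivAt_cos t).const_mul v₁).add ((hasDerivAt_sin t).const_mul v₂)).add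
    (((hasDerivAt_cos t).pow 2).const_mul v₃)).congr_deriv ?_
  ring

theorem deriv_projection_eq_derivDivCos_mul_cos (v₁ v₂ v₃ : ℝ) {t : ℝ} (ht : cos t ≠ 0) :
    deriv (fun t => v₁ * cos t + v₂ * sin t + v₃ * cos t ^ 2) t
      = derivDivCos v₁ v₂ v₃ t * cos t := by
  rw [(hasDerivAt_projection v₁ v₂ v₃ t).deriv, derivDivCos, tan_eq_sin_div_cos]
  field_simp
  ring

theorem hasDerivAt_derivDivCos (v₁ v₂ v₃ : ℝ) {t : ℝ} (ht : cos t ≠ 0) :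
    HasDerivAt (derivDivCos v₁ v₂ v₃) (-v₁ / cos t ^ 2 - 2 * v₃ * cos t) t := by
  refine ((((hasDerivAt_tan ht).const_mul v₁).const_sub v₂).sub
    ((hasDerivAt_sin t).const_mul (2 * v₃))).congr_deriv ?_
  ring

theorem exists_cos_pow_three_eq_of_derivDivCos_eq {v₁ v₂ v₃ a b : ℝ} (ha : 0 < a) (hb : b < π / 2)
    (hab : a < b) (h : derivDivCos v₁ v₂ v₃ a = derivDivCos v₁ v₂ v₃ b) :
    ∃ c ∈ Ioo a b, v₁ + 2 * v₃ * cos c ^ 3 = 0 := by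
  have hcos : ∀ x ∈ Icc a b, 0 < cos x := fun x hx =>
    cos_pos_of_mem_Ioo ⟨by linarith [hx.1, pi_pos], by linarith [hx.2]⟩
  have hderiv : ∀ x ∈ Icc a b, HasDerivAt (derivDivCos v₁ v₂ v₃)
      (-v₁ / cos x ^ 2 - 2 * v₃ * cos x) x := fun x hx =>
    hasDerivAt_derivDivCos v₁ v₂ v₃ (hcos x hx).ne'
  obtain ⟨c, hc, hc0⟩ := exists_hasDerivAt_eq_zero hab
    (fun x hx => (hderiv x hx).continuousAt.continuousWithinAt) h
    (fun x hx => hderiv x (Ioo_subset_Icc_self hx))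
  refine ⟨c, hc, ?_⟩
  have := (hcos c (Ioo_subset_Icc_self hc)).ne'
  field_simp at hc0
  linear_combination -hc0

theorem eq_zero_of_derivDivCos_eq_zero {v₁ v₂ v₃ a b c : ℝ} (ha : 0 < a) (hc : c < π / 2)
    (hab : a < b) (hbc : b < c) (hza : derivDivCos v₁ v₂ v₃ a = 0)
    (hzb : derivDivCos v₁ v₂ v₃ b = 0) (hzc : derivDivCos v₁ v₂ v₃ c = 0) :
    v₁ = 0 ∧ v₂ = 0 ∧ v₃ = 0 := by
  obtain ⟨x, hx, hvx⟩ := exists_cos_pow_three_eq_of_derivDivCos_eq ha (hbc.trans hc) hab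
    (hza.trans hzb.symm)
  obtain ⟨y, hy, hvy⟩ := exists_cos_pow_three_eq_of_derivDivCos_eq (ha.trans hab) hc hbc
    (hzb.trans hzc.symm)
  have hcos : cos y ^ 3 < cos x ^ 3 := by
    have hy0 : 0 < cos y := cos_pos_of_mem_Ioo ⟨by linarith [hy.1, pi_pos], by linarith [hy.2]⟩
    refine pow_lt_pow_left₀ (strictAntiOn_cos ?_ ?_ (hx.2.trans hy.1)) hy0.le (by norm_num)
    · exact ⟨by linarith [hx.1], by linarith [hx.2, pi_pos]⟩
    · exact ⟨by linarith [hy.1], by linarith [hy.2, pi_pos]⟩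
  have hv₃ : v₃ = 0 := by
    have : v₃ * (cos x ^ 3 - cos y ^ 3) = 0 := by linear_combination (hvx - hvy) / 2
    exact (mul_eq_zero.1 this).resolve_right (sub_pos.2 hcos).ne'
  have hv₁ : v₁ = 0 := by simpa [hv₃] using hvx
  refine ⟨hv₁, ?_, hv₃⟩
  simpa [derivDivCos, hv₁, hv₃] using hza

theorem stmt_10 (v₁ v₂ v₃ : ℝ) (hv : ¬(v₁ = 0 ∧ v₂ = 0 ∧ v₃ = 0)) :
    ∃ s : Finset ℝ, s.card ≤ 2 ∧
      ∀ t ∈ Set.Ioo (0:ℝ) (Real.pi / 2),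
        deriv (fun t => v₁ * Real.cos t + v₂ * Real.sin t + v₃ * (Real.cos t)^2) t = 0 →
          t ∈ s := by
  have hzero : ∀ t ∈ Ioo 0 (π / 2),
      deriv (fun t => v₁ * cos t + v₂ * sin t + v₃ * cos t ^ 2) t = 0 →
        derivDivCos v₁ v₂ v₃ t = 0 := fun t ht hd => by
    have hcos : 0 < cos t := cos_pos_of_mem_Ioo ⟨by linarith [ht.1, pi_pos], ht.2⟩
    rw [deriv_projection_eq_derivDivCos_mul_cos v₁ v₂ v₃ hcos.ne'] at hd
    exact (mul_eq_zero.1 hd).resolve_right hcos.ne'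
  obtain ⟨s, hs, hmem⟩ := exists_finset_card_le_two_of_not_lt_lt
    (p := fun t => t ∈ Ioo 0 (π / 2) ∧
      deriv (fun t => v₁ * cos t + v₂ * sin t + v₃ * cos t ^ 2) t = 0)
    fun a b c ⟨ha, hda⟩ ⟨hb, hdb⟩ ⟨hc, hdc⟩ hab hbc => hv <|
      eq_zero_of_derivDivCos_eq_zero ha.1 hc.2 hab hbc
        (hzero a ha hda) (hzero b hb hdb) (hzero c hc hdc)
  exact ⟨s, hs, fun t ht hd => hmem t ⟨ht, hd⟩⟩
end

section
/- Let a, b be real numbers with a < 0 and b > 0, and let h(x) = (b + x)·√(1 - x²). Then h is strictly concave on the interval (0, 1) where its second derivative exists, h(0) = b > 0, and consequently the line x ↦ |a|·x intersects the graph of h at most once for x ∈ (0, 1). -/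
/-!
The second derivative of `h` is `(2x³ - 3x - b) / (1 - x²)^(3/2)`, which is negative on `(0, 1)`,
so `h` is strictly concave on `[0, 1]`, and so is `g x = h x - |a| x`. If `g` had two zeros
`0 < x₁ < x₂`, then `x₁` would lie strictly between `0` and `x₂`, and strict concavity would give
`g x₁ > min (g 0) (g x₂) = min b 0 = 0`.
-/

open Real Set

theorem StrictConcaveOn.subsingleton_zeros_of_nonneg {s : Set ℝ} {f : ℝ → ℝ} {p : ℝ}
    (hf : StrictConcaveOn ℝ s f) (hp : p ∈ s) (hfp : 0 ≤ f p) :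
    {x ∈ s | p < x ∧ f x = 0}.Subsingleton := by
  suffices key : ∀ x ∈ {x ∈ s | p < x ∧ f x = 0}, ∀ y ∈ {x ∈ s | p < x ∧ f x = 0}, ¬x < y by
    intro x hx y hy
    exact le_antisymm (not_lt.1 (key y hy x hx)) (not_lt.1 (key x hx y hy))
  rintro x ⟨-, hpx, hfx⟩ y ⟨hy, -, hfy⟩ hxy
  have hx_mem : x ∈ openSegment ℝ p y := by
    rw [openSegment_eq_Ioo (hpx.trans hxy)]
    exact ⟨hpx, hxy⟩
  have := hf.lt_on_openSegment hp hy (hpx.trans hxy).ne hx_mem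
  rw [hfx, hfy, min_eq_right hfp] at this
  exact lt_irrefl 0 this

section Derivatives

variable {x : ℝ}

theorem hasDerivAt_sqrt_one_sub_sq (hx : x ^ 2 < 1) :
    HasDerivAt (fun y => √(1 - y ^ 2)) (-x / √(1 - x ^ 2)) x := by
  have hpos : 0 < 1 - x ^ 2 := by linarith
  refine (((hasDerivAt_pow 2 x).const_sub 1).sqrt hpos.ne').congr_deriv ?_
  field_simp
  norm_num

theorem hasDerivAt_add_mul_sqrt_one_sub_sq (b : ℝ) (hx : x ^ 2 < 1) :
    HasDerivAt (fun y => (b + y) * √(1 - y ^ 2)) ((1 - b * x - 2 * x ^ 2) / √(1 - x ^ 2)) x := by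
  have hpos : 0 < 1 - x ^ 2 := by linarith
  have hsq : √(1 - x ^ 2) ^ 2 = 1 - x ^ 2 := sq_sqrt hpos.le
  have hs : 0 < √(1 - x ^ 2) := sqrt_pos.2 hpos
  refine (((hasDerivAt_id x).const_add b).mul (hasDerivAt_sqrt_one_sub_sq hx)).congr_deriv ?_
  field_simp
  simp only [id]
  linear_combination hsq

theorem hasDerivAt_div_sqrt_one_sub_sq (b : ℝ) (hx : x ^ 2 < 1) :
    HasDerivAt (fun y => (1 - b * y - 2 * y ^ 2) / √(1 - y ^ 2))
      ((2 * x ^ 3 - 3 * x - b) / √(1 - x ^ 2) ^ 3) x := by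
  have hpos : 0 < 1 - x ^ 2 := by linarith
  have hsq : √(1 - x ^ 2) ^ 2 = 1 - x ^ 2 := sq_sqrt hpos.le
  have hs : 0 < √(1 - x ^ 2) := sqrt_pos.2 hpos
  have hnum : HasDerivAt (fun y => 1 - b * y - 2 * y ^ 2) (-b - 4 * x) x := by
    refine ((((hasDerivAt_id x).const_mul b).const_sub 1).sub
      ((hasDerivAt_pow 2 x).const_mul 2)).congr_deriv ?_
    simp only [Nat.cast_ofNat]
    ring
  refine (hnum.div (hasDerivAt_sqrt_one_sub_sq hx) hs.ne').congr_deriv ?_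
  field_simp
  linear_combination (-b - 4 * x) * hsq

end Derivatives

theorem strictConcaveOn_add_mul_sqrt_one_sub_sq {b : ℝ} (hb : 0 ≤ b) :
    StrictConcaveOn ℝ (Icc 0 1) (fun x => (b + x) * √(1 - x ^ 2)) := by
  refine strictConcaveOn_of_deriv2_neg (convex_Icc 0 1) (by fun_prop) fun x hx => ?_
  rw [interior_Icc] at hx
  have hx2 : x ^ 2 < 1 := by nlinarith [hx.1, hx.2]
  have hderiv : deriv (fun y => (b + y) * √(1 - y ^ 2))
      =ᶠ[nhds x] fun y => (1 - b * y - 2 * y ^ 2) / √(1 - y ^ 2) := by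
    filter_upwards [isOpen_Ioo.mem_nhds hx] with y hy
    exact (hasDerivAt_add_mul_sqrt_one_sub_sq b (by nlinarith [hy.1, hy.2])).deriv
  rw [Function.iterate_succ_apply, Function.iterate_one, hderiv.deriv_eq,
    (hasDerivAt_div_sqrt_one_sub_sq b hx2).deriv]
  have hs : 0 < √(1 - x ^ 2) := sqrt_pos.2 (by linarith)
  exact div_neg_of_neg_of_pos (by nlinarith [hx.1, hx.2]) (by positivity)

theorem stmt_12_general (a b : ℝ) (hb : 0 < b) :
    let h : ℝ → ℝ := fun x => (b + x) * Real.sqrt (1 - x^2)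
    StrictConcaveOn ℝ (Set.Ioo (0:ℝ) 1) h ∧
    h 0 = b ∧ 0 < b ∧
    {x ∈ Set.Ioo (0:ℝ) 1 | |a| * x = h x}.Subsingleton := by
  intro h
  have hconc : StrictConcaveOn ℝ (Icc 0 1) h := strictConcaveOn_add_mul_sqrt_one_sub_sq hb.le
  have h0 : h 0 = b := by simp [h]
  refine ⟨hconc.subset Ioo_subset_Icc_self (convex_Ioo 0 1), h0, hb, ?_⟩
  have hline : ConvexOn ℝ (Icc 0 1) fun x : ℝ => |a| • id x :=
    (convexOn_id (convex_Icc 0 1)).smul (abs_nonneg a)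
  refine ((hconc.sub_convexOn hline).subsingleton_zeros_of_nonneg (p := 0)
    (left_mem_Icc.2 zero_le_one) (by simp [h0, hb.le])).anti ?_
  rintro x ⟨hx, hxh⟩
  exact ⟨Ioo_subset_Icc_self hx, hx.1, by simp [← hxh]⟩

theorem stmt_12 (a b : ℝ) (ha : a < 0) (hb : 0 < b) :
    let h : ℝ → ℝ := fun x => (b + x) * Real.sqrt (1 - x^2)
    StrictConcaveOn ℝ (Set.Ioo (0:ℝ) 1) h ∧
    h 0 = b ∧ 0 < b ∧
    {x ∈ Set.Ioo (0:ℝ) 1 | |a| * x = h x}.Subsingleton :=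
  stmt_12_general a b hb
end

section
/- The curve η(t) = (cos t, sin t, cos² t), t ∈ [0, 2π), has the property that for every unit vector v ∈ ℝ³, the function t ↦ ⟨η(t), v⟩ has at most two local maxima on the circle ℝ/2πℤ. -/
open Polynomial Complex Set Finset Filter Topology

/-!
With `z = exp (t * I)`, the derivative `-v₁ sin t + v₂ cos t - 2 v₃ cos t sin t` of `⟨η(t), v⟩`
equals `P(z) / (2 I z²)` for a nonzero polynomial `P` of degree at most 4, and `t ↦ z` is injective
on `[0, 2π)`; so there are at most 4 critical points in `[0, 2π)`. Between two local maxima of a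
continuous function there is a local minimum, hence `k` local maxima in an interval force
`2k - 1` critical points there, and `2k - 1 ≤ 4` gives `k ≤ 2`.
-/

theorem Finset.two_mul_card_le_card_add_one_of_exists_between {α : Type*} [LinearOrder α]
    {S Z : Finset α} (hSZ : S ⊆ Z)
    (hbetween : ∀ a ∈ S, ∀ b ∈ S, a < b → ∃ m ∈ Z, a < m ∧ m < b) :
    2 * #S ≤ #Z + 1 := by
  classical
  induction S using Finset.induction_on_max generalizing Z with
  | empty => simp
  | insert x T hxT ih =>
    rcases T.eq_empty_or_nonempty with rfl | hT
    · have : 0 < #Z := card_pos.2 ⟨x, hSZ (mem_insert_self x ∅)⟩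
      simp only [insert_empty, card_singleton]
      omega
    obtain ⟨m, hmZ, htm, hmx⟩ := hbetween _ (mem_insert_of_mem (T.max'_mem hT)) x
      (mem_insert_self x T) (hxT _ (T.max'_mem hT))
    have hT_lt : ∀ y ∈ T, y < m := fun y hy => (T.le_max' y hy).trans_lt htm
    have hIH : 2 * #T ≤ #(Z.filter (· < m)) + 1 := by
      refine ih (fun y hy => mem_filter.2 ⟨hSZ (mem_insert_of_mem hy), hT_lt y hy⟩)
        fun a ha b hb hab => ?_
      obtain ⟨m', hm'Z, ham', hm'b⟩ :=
        hbetween a (mem_insert_of_mem ha) b (mem_insert_of_mem hb) hab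
      exact ⟨m', mem_filter.2 ⟨hm'Z, hm'b.trans (hT_lt b hb)⟩, ham', hm'b⟩
    have hupper : 2 ≤ #(Z.filter (¬ · < m)) := by
      have hsub : ({m, x} : Finset α) ⊆ Z.filter (¬ · < m) := by
        intro y hy
        simp only [mem_insert, mem_singleton] at hy
        rcases hy with rfl | rfl
        · exact mem_filter.2 ⟨hmZ, lt_irrefl _⟩
        · exact mem_filter.2 ⟨hSZ (mem_insert_self _ _), hmx.le.not_gt⟩
      simpa [card_pair hmx.ne] using card_le_card hsub
    have hsplit := card_filter_add_card_filter_not (s := Z) (· < m)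
    rw [card_insert_of_notMem fun hx => (hxT x hx).false]
    omega

theorem exists_isLocalMin_mem_Ioo_of_isLocalMax {f : ℝ → ℝ} {a b : ℝ} (hab : a < b)
    (hf : ContinuousOn f (Icc a b)) (ha : IsLocalMax f a) (hb : IsLocalMax f b) :
    ∃ c ∈ Ioo a b, IsLocalMin f c := by
  obtain ⟨m, hm, hmin⟩ := isCompact_Icc.exists_isMinOn (nonempty_Icc.2 hab.le) hf
  -- a minimum on `[a, b]` attained at an endpoint that is a local maximum is also attained nearby
  suffices ∃ c ∈ Ioo a b, f c ≤ f m by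
    obtain ⟨c, hc, hcm⟩ := this
    exact ⟨c, hc, IsMinOn.isLocalMin (fun x hx => hcm.trans (hmin hx)) (Icc_mem_nhds hc.1 hc.2)⟩
  rcases hm.1.eq_or_lt with rfl | ham
  · exact (Filter.Eventually.and (Ioo_mem_nhdsGT hab) (ha.filter_mono nhdsWithin_le_nhds)).exists
  rcases hm.2.eq_or_lt with rfl | hmb
  · exact (Filter.Eventually.and (Ioo_mem_nhdsLT hab) (hb.filter_mono nhdsWithin_le_nhds)).exists
  exact ⟨m, ⟨ham, hmb⟩, le_rfl⟩

theorem two_mul_ncard_isLocalMax_le {f : ℝ → ℝ} {I : Set ℝ} [I.OrdConnected]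
    (hf : ContinuousOn f I) (hZ : {t ∈ I | deriv f t = 0}.Finite) :
    2 * {t ∈ I | IsLocalMax f t}.ncard ≤ {t ∈ I | deriv f t = 0}.ncard + 1 := by
  have hSZ : {t ∈ I | IsLocalMax f t} ⊆ {t ∈ I | deriv f t = 0} :=
    fun t ht => ⟨ht.1, ht.2.deriv_eq_zero⟩
  have hS := hZ.subset hSZ
  rw [ncard_eq_toFinset_card _ hS, ncard_eq_toFinset_card _ hZ]
  refine two_mul_card_le_card_add_one_of_exists_between (Set.Finite.toFinset_subset_toFinset.2 hSZ)
    fun a ha b hb hab => ?_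
  rw [Set.Finite.mem_toFinset] at ha hb
  have hIcc : Icc a b ⊆ I := Set.OrdConnected.out ‹_› ha.1 hb.1
  obtain ⟨c, hc, hmin⟩ := exists_isLocalMin_mem_Ioo_of_isLocalMax hab (hf.mono hIcc) ha.2 hb.2
  exact ⟨c, hZ.mem_toFinset.2 ⟨hIcc (Ioo_subset_Icc_self hc), hmin.deriv_eq_zero⟩, hc⟩

theorem Polynomial.finite_and_ncard_le_natDegree_of_isRoot_cexp {p : ℂ[X]} (hp : p ≠ 0)
    {s : Set ℝ} (hs : s ⊆ Ico 0 (2 * Real.pi)) (hroot : ∀ t ∈ s, p.IsRoot (exp (t * I))) :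
    s.Finite ∧ s.ncard ≤ p.natDegree := by
  classical
  have hmaps : MapsTo (fun t : ℝ => exp (t * I)) s (p.roots.toFinset : Set ℂ) := fun t ht => by
    simpa [mem_roots hp] using hroot t ht
  have hinj : InjOn (fun t : ℝ => exp (t * I)) s :=
    (Subtype.val_injective.comp_injOn (Circle.exp_injOn_Ico (by simp))).mono hs
  refine ⟨(p.roots.toFinset.finite_toSet).of_injOn hmaps hinj, ?_⟩
  calc s.ncard ≤ (p.roots.toFinset : Set ℂ).ncard :=
        ncard_le_ncard_of_injOn _ hmaps hinj p.roots.toFinset.finite_toSet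
    _ = #p.roots.toFinset := ncard_coe_finset _
    _ ≤ Multiset.card p.roots := Multiset.toFinset_card_le _
    _ ≤ p.natDegree := card_roots' p

noncomputable def criticalPoly (v₁ v₂ v₃ : ℝ) : ℂ[X] :=
  C (-v₃ : ℂ) * X ^ 4 + C (-v₁ + v₂ * I) * X ^ 3 + C (v₁ + v₂ * I) * X + C (v₃ : ℂ)

theorem criticalPoly_natDegree_le (v₁ v₂ v₃ : ℝ) : (criticalPoly v₁ v₂ v₃).natDegree ≤ 4 := by
  unfold criticalPoly
  compute_degree

theorem criticalPoly_eq_zero_iff {v₁ v₂ v₃ : ℝ} :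
    criticalPoly v₁ v₂ v₃ = 0 ↔ v₁ = 0 ∧ v₂ = 0 ∧ v₃ = 0 := by
  refine ⟨fun h => ?_, fun ⟨h₁, h₂, h₃⟩ => by simp [criticalPoly, h₁, h₂, h₃]⟩
  have h₀ := congrArg (coeff · 0) h
  have h₁ := congrArg (coeff · 1) h
  simp only [criticalPoly, coeff_add, coeff_C_mul, coeff_X_pow, coeff_X, coeff_C] at h₀ h₁
  norm_num at h₀ h₁
  obtain ⟨h₁re, h₁im⟩ : v₁ = 0 ∧ v₂ = 0 := by simpa [Complex.ext_iff] using h₁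
  exact ⟨h₁re, h₁im, h₀⟩

-- With `z = exp (t * I)`, `2 cos t = z + z⁻¹` and `2 I sin t = z - z⁻¹`.
theorem criticalPoly_eval_cexp (v₁ v₂ v₃ t : ℝ) :
    (criticalPoly v₁ v₂ v₃).eval (exp (t * I)) = 2 * I * exp (t * I) ^ 2 *
      ↑(-v₁ * Real.sin t + v₂ * Real.cos t - 2 * v₃ * (Real.cos t * Real.sin t)) := by
  push_cast
  simp only [criticalPoly, eval_add, eval_mul, eval_pow, eval_C, eval_X, Complex.cos, Complex.sin,
    neg_mul, exp_neg]
  field_simp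
  linear_combination (exp (t * I) * v₁ - exp (t * I) ^ 3 * v₁ - exp (t * I) ^ 4 * v₃ + v₃) * I_sq

theorem stmt_17 (v₁ v₂ v₃ : ℝ) (hv : v₁^2 + v₂^2 + v₃^2 = 1) :
    ∃ s : Finset ℝ, s.card ≤ 2 ∧
      ∀ t ∈ Set.Ico (0:ℝ) (2 * Real.pi),
        IsLocalMax (fun t => v₁ * Real.cos t + v₂ * Real.sin t + v₃ * (Real.cos t)^2) t →
          t ∈ s := by
  set f := fun t => v₁ * Real.cos t + v₂ * Real.sin t + v₃ * (Real.cos t)^2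
  have hf (t : ℝ) :
      HasDerivAt f (-v₁ * Real.sin t + v₂ * Real.cos t - 2 * v₃ * (Real.cos t * Real.sin t)) t := by
    refine ((((Real.hasDerivAt_cos t).const_mul v₁).add ((Real.hasDerivAt_sin t).const_mul v₂)).add
      (((Real.hasDerivAt_cos t).pow 2).const_mul v₃)).congr_deriv ?_
    norm_num
    ring
  have hp : criticalPoly v₁ v₂ v₃ ≠ 0 := fun h => by
    obtain ⟨rfl, rfl, rfl⟩ := criticalPoly_eq_zero_iff.1 h
    norm_num at hv
  obtain ⟨hZ, hZcard⟩ := finite_and_ncard_le_natDegree_of_isRoot_cexp hp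
    (s := {t ∈ Ico 0 (2 * Real.pi) | deriv f t = 0}) (fun t ht => ht.1) fun t ht => by
      rw [IsRoot, criticalPoly_eval_cexp, ← (hf t).deriv, ht.2]
      simp
  have hS : {t ∈ Ico 0 (2 * Real.pi) | IsLocalMax f t}.Finite :=
    hZ.subset fun t ht => ⟨ht.1, ht.2.deriv_eq_zero⟩
  have hcard := two_mul_ncard_isLocalMax_le (f := f)
    (fun t _ => (hf t).continuousAt.continuousWithinAt) hZ
  refine ⟨hS.toFinset, ?_, fun t ht hmax => hS.mem_toFinset.2 ⟨ht, hmax⟩⟩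
  rw [← ncard_eq_toFinset_card _ hS]
  have := criticalPoly_natDegree_le v₁ v₂ v₃
  omega
end
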